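/- arXiv:2202.02184 — 4 statements merged into one kernel-verified Lean document; each statement's English description precedes it below -/
import Mathlib

section
/- The cone S' = {(C,Q,E) ∈ ℝ³ : C+2Q ≤ 0, Q−E ≤ 0, C+Q−E ≤ 0} equals the conical hull of the three rays generated by (−2,1,1), (0,−1,−1), and (2,−1,1); i.e., S' = {x·(−2,1,1) + y·(0,−1,−1) + z·(2,−1,1) : x,y,z ≥ 0}. -/
/-!
The three generators form a basis of `ℝ³` whose dual basis consists of the three constraint
functionals, negated and halved. Hence the generator coordinates of a point are nonnegative
exactly when it satisfies the three inequalities.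
-/

/-- The cone `S' = {C+2Q ≤ 0, Q−E ≤ 0, C+Q−E ≤ 0}` is the conical hull of
`(−2,1,1)` (teleportation), `(0,−1,−1)` (resource conversion) and `(2,−1,1)`
(dense coding). -/
theorem stmt9 :
    {p : ℝ × ℝ × ℝ | p.1 + 2 * p.2.1 ≤ 0 ∧ p.2.1 - p.2.2 ≤ 0 ∧
        p.1 + p.2.1 - p.2.2 ≤ 0}
      = {p : ℝ × ℝ × ℝ | ∃ x y z : ℝ, 0 ≤ x ∧ 0 ≤ y ∧ 0 ≤ z ∧
          p = x • ((-2 : ℝ), (1 : ℝ), (1 : ℝ)) + y • ((0 : ℝ), (-1 : ℝ), (-1 : ℝ))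
              + z • ((2 : ℝ), (-1 : ℝ), (1 : ℝ))} := by
  ext ⟨C, Q, E⟩
  simp only [Set.mem_ofPred_eq, Prod.smul_mk, smul_eq_mul, Prod.mk_add_mk, Prod.mk.injEq]
  constructor
  · rintro ⟨hCQ, hQE, hCQE⟩
    exact ⟨-(C + Q - E) / 2, -(C + 2 * Q) / 2, -(Q - E) / 2,
      by linarith, by linarith, by linarith, by ring, by ring, by ring⟩
  · rintro ⟨x, y, z, hx, hy, hz, rfl, rfl, rfl⟩
    exact ⟨by linarith, by linarith, by linarith⟩
end

section
/- For δ ∈ [0, 1/2], a triple (C,Q,E) ∈ ℝ³ satisfies [∃ t ∈ [0, log q] with C+2Q ≤ (1−δ)(log q + t), Q−E ≤ (1−2δ)t, C+Q−E ≤ (1−δ)log q − δt] if and only if it satisfies all of: C+2Q ≤ 2(1−δ)log q, Q−E ≤ (1−2δ)log q, C+Q−E ≤ (1−δ)log q, C+(1+δ)Q−(1−δ)E ≤ (1−δ)log q, and ((1−2δ)/(1−δ))C + Q − E ≤ (1−2δ)log q (the last inequality interpreted for δ < 1; for δ = 1 only the first four are required with their degenerate forms). -/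
/-!
With `L = logb 2 q ≥ 0`, the three constraints say `C + 2Q - (1-δ)L ≤ (1-δ)t` and `Q - E ≤ (1-2δ)t`,
two lower bounds on `t` with nonnegative coefficients, and `δt ≤ (1-δ)L - (C+Q-E)`, an upper bound.
Fourier–Motzkin elimination over `t ∈ [0, L]` pairs each lower bound (including `0 ≤ t`) with
each upper bound (including `t ≤ L`); the pairs `(1-δ)t`/`δt` and `(1-2δ)t`/`δt` give the last
two inequalities, and the smallest admissible `t`, the maximum of `0` and the two lower bounds,
is a witness.
-/

section FourierMotzkin

variable {α : Type*} [Field α] [LinearOrder α] [IsStrictOrderedRing α] {c r t L : α}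

/-- For `c = 0` this uses the junk value `r / 0 = 0`, so that `r / c` is a valid lower bound on `t`
for every `c ≥ 0`. -/
lemma le_mul_of_div_le_of_le_mul (hc : 0 ≤ c) (hrL : r ≤ c * L) (ht : r / c ≤ t) :
    r ≤ c * t := by
  rcases hc.eq_or_lt with rfl | hc
  · simpa using hrL
  · exact (div_le_iff₀' hc).1 ht

theorem exists_mem_Icc_le_mul_le_mul_mul_le_iff {a b d p s : α}
    (ha : 0 ≤ a) (hb : 0 ≤ b) (hd : 0 ≤ d) :
    (∃ t ∈ Set.Icc 0 L, p ≤ a * t ∧ r ≤ b * t ∧ d * t ≤ s) ↔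
      0 ≤ L ∧ p ≤ a * L ∧ r ≤ b * L ∧ 0 ≤ s ∧ d * p ≤ a * s ∧ d * r ≤ b * s := by
  constructor
  · rintro ⟨t, ⟨ht0, htL⟩, hp, hr, hs⟩
    refine ⟨ht0.trans htL, hp.trans (by gcongr), hr.trans (by gcongr),
      (mul_nonneg hd ht0).trans hs, ?_, ?_⟩
    · calc d * p ≤ d * (a * t) := by gcongr
        _ = a * (d * t) := by ring
        _ ≤ a * s := by gcongr
    · calc d * r ≤ d * (b * t) := by gcongr
        _ = b * (d * t) := by ring
        _ ≤ b * s := by gcongr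
  · rintro ⟨hL, hpL, hrL, hs, hps, hrs⟩
    set t := max 0 (max (p / a) (r / b)) with ht
    have hpt : p / a ≤ t := (le_max_left _ _).trans (le_max_right _ _)
    have hrt : r / b ≤ t := (le_max_right _ _).trans (le_max_right _ _)
    have htL : t ≤ L :=
      max_le hL (max_le (div_le_of_le_mul₀ ha hL (by linarith))
        (div_le_of_le_mul₀ hb hL (by linarith)))
    have hdt : d * t ≤ s := by
      rw [ht, mul_max_of_nonneg _ _ hd, mul_max_of_nonneg _ _ hd, mul_zero, ← mul_div_assoc,
        ← mul_div_assoc]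
      exact max_le hs (max_le (div_le_of_le_mul₀ ha hs (by linarith))
        (div_le_of_le_mul₀ hb hs (by linarith)))
    exact ⟨t, ⟨le_max_left _ _, htL⟩, le_mul_of_div_le_of_le_mul ha hpL hpt,
      le_mul_of_div_le_of_le_mul hb hrL hrt, hdt⟩

end FourierMotzkin

/-- Fourier–Motzkin elimination of `t` for `δ ∈ [0, 1/2]`. -/
theorem stmt11 (q δ : ℝ) (hq : 1 < q) (hδ : δ ∈ Set.Icc (0 : ℝ) (1 / 2))
    (C Q E : ℝ) :
    (∃ t ∈ Set.Icc (0 : ℝ) (Real.logb 2 q),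
        C + 2 * Q ≤ (1 - δ) * (Real.logb 2 q + t) ∧
        Q - E ≤ (1 - 2 * δ) * t ∧
        C + Q - E ≤ (1 - δ) * Real.logb 2 q - δ * t)
      ↔ (C + 2 * Q ≤ 2 * (1 - δ) * Real.logb 2 q ∧
          Q - E ≤ (1 - 2 * δ) * Real.logb 2 q ∧
          C + Q - E ≤ (1 - δ) * Real.logb 2 q ∧
          C + (1 + δ) * Q - (1 - δ) * E ≤ (1 - δ) * Real.logb 2 q ∧
          ((1 - 2 * δ) / (1 - δ)) * C + Q - E ≤ (1 - 2 * δ) * Real.logb 2 q) := by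
  obtain ⟨hδ0, hδ2⟩ := hδ
  set L := Real.logb 2 q
  have hL : 0 ≤ L := (Real.logb_pos one_lt_two hq).le
  have ha : 0 < 1 - δ := by linarith
  have hlast : ((1 - 2 * δ) / (1 - δ)) * C + Q - E ≤ (1 - 2 * δ) * L ↔
      δ * (Q - E) ≤ (1 - 2 * δ) * ((1 - δ) * L - (C + Q - E)) := by
    rw [← mul_le_mul_iff_of_pos_left ha, mul_sub, mul_add, ← mul_assoc,
      mul_div_cancel₀ _ ha.ne']
    constructor <;> intro h <;> linarith
  calc _ ↔ ∃ t ∈ Set.Icc 0 L, C + 2 * Q - (1 - δ) * L ≤ (1 - δ) * t ∧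
          Q - E ≤ (1 - 2 * δ) * t ∧ δ * t ≤ (1 - δ) * L - (C + Q - E) := by
        refine exists_congr fun t => and_congr_right fun _ => ?_
        constructor <;> rintro ⟨h₁, h₂, h₃⟩ <;> exact ⟨by linarith, h₂, by linarith⟩
    _ ↔ _ := exists_mem_Icc_le_mul_le_mul_mul_le_iff ha.le (by linarith) hδ0
    _ ↔ _ := by
        rw [hlast]
        constructor
        · rintro ⟨-, h₁, h₂, h₃, h₄, h₅⟩
          exact ⟨by linarith, h₂, by linarith, by linarith, h₅⟩
        · rintro ⟨h₁, h₂, h₃, h₄, h₅⟩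
          exact ⟨hL, by linarith, h₂, by linarith, by linarith, h₅⟩
end

section
/- For δ ∈ [1/2, 1), a triple (C,Q,E) ∈ ℝ³ satisfies [∃ t ∈ [0, log q] with C+2Q ≤ (1−δ)(log q + t), Q−E ≤ (1−2δ)t, C+Q−E ≤ (1−δ)log q − δt] if and only if it satisfies: C+2Q ≤ 2(1−δ)log q, Q−E ≤ 0, C+Q−E ≤ (1−δ)log q, C+(1+δ)Q−(1−δ)E ≤ (1−δ)log q, and ((2δ−1)/(1−δ))C + ((3δ−1)/(1−δ))Q − E ≤ (2δ−1)log q. -/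
/-!
Substituting `a = 1 - δ > 0` and `b = 2δ - 1 ≥ 0`, the three constraints say
`C + 2Q - a log q ≤ a t`, `b t ≤ E - Q` and `δ t ≤ a log q - (C + Q - E)`: one lower bound on `t`
and, together with `t ≤ log q`, three upper bounds with nonnegative coefficients. So a feasible
`t ≥ 0` exists iff the least candidate `max 0 ((C + 2Q - a log q) / a)` is feasible, and pairing
each upper bound with each of the two lower bounds `0` and `(C + 2Q - a log q) / a` gives the five
conditions (the sixth pair, `0 ≤ log q`, holds because `q > 1`).
-/

open Set

section FourierMotzkin

variable {a X : ℝ}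

theorem exists_nonneg_le_mul_and_iff (ha : 0 < a) {P : ℝ → Prop}
    (hP : ∀ s t, s ≤ t → P t → P s) :
    (∃ t, 0 ≤ t ∧ X ≤ a * t ∧ P t) ↔ P (max 0 (X / a)) := by
  constructor
  · rintro ⟨t, ht0, hXt, hPt⟩
    exact hP _ t (max_le ht0 ((div_le_iff₀' ha).2 hXt)) hPt
  · intro h
    exact ⟨_, le_max_left _ _, (div_le_iff₀' ha).1 (le_max_right _ _), h⟩

theorem mul_max_zero_div_le_iff {c y : ℝ} (ha : 0 < a) (hc : 0 ≤ c) :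
    c * max 0 (X / a) ≤ y ↔ 0 ≤ y ∧ c * X ≤ a * y := by
  rw [mul_max_of_nonneg _ _ hc, max_le_iff, mul_zero, mul_div_assoc', div_le_iff₀' ha]

theorem exists_nonneg_le_mul_and_three_le_iff {b d L Y Z : ℝ} (ha : 0 < a) (hb : 0 ≤ b)
    (hd : 0 ≤ d) :
    (∃ t, 0 ≤ t ∧ X ≤ a * t ∧ t ≤ L ∧ b * t ≤ Y ∧ d * t ≤ Z) ↔
      (0 ≤ L ∧ X ≤ a * L) ∧ (0 ≤ Y ∧ b * X ≤ a * Y) ∧ (0 ≤ Z ∧ d * X ≤ a * Z) := by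
  rw [exists_nonneg_le_mul_and_iff ha, max_le_iff, div_le_iff₀' ha, mul_max_zero_div_le_iff ha hb,
    mul_max_zero_div_le_iff ha hd]
  rintro s t hst ⟨hL, hY, hZ⟩
  exact ⟨hst.trans hL, (mul_le_mul_of_nonneg_left hst hb).trans hY,
    (mul_le_mul_of_nonneg_left hst hd).trans hZ⟩

end FourierMotzkin

theorem div_mul_add_div_mul_sub_le_iff {a b c C Q E L : ℝ} (ha : 0 < a) :
    (b / a) * C + (c / a) * Q - E ≤ b * L ↔ b * C + c * Q - a * E ≤ a * (b * L) := by
  rw [div_mul_eq_mul_div, div_mul_eq_mul_div, ← add_div, sub_le_iff_le_add, div_le_iff₀ ha]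
  constructor <;> intro h <;> linear_combination h

/-- Fourier–Motzkin elimination of `t` for `δ ∈ [1/2, 1)`. -/
theorem stmt12 (q δ : ℝ) (hq : 1 < q) (hδ : δ ∈ Set.Ico (1 / 2 : ℝ) 1)
    (C Q E : ℝ) :
    (∃ t ∈ Set.Icc (0 : ℝ) (Real.logb 2 q),
        C + 2 * Q ≤ (1 - δ) * (Real.logb 2 q + t) ∧
        Q - E ≤ (1 - 2 * δ) * t ∧
        C + Q - E ≤ (1 - δ) * Real.logb 2 q - δ * t)
      ↔ (C + 2 * Q ≤ 2 * (1 - δ) * Real.logb 2 q ∧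
          Q - E ≤ 0 ∧
          C + Q - E ≤ (1 - δ) * Real.logb 2 q ∧
          C + (1 + δ) * Q - (1 - δ) * E ≤ (1 - δ) * Real.logb 2 q ∧
          ((2 * δ - 1) / (1 - δ)) * C + ((3 * δ - 1) / (1 - δ)) * Q - E
            ≤ (2 * δ - 1) * Real.logb 2 q) := by
  obtain ⟨hδ1, hδ2⟩ := hδ
  set L := Real.logb 2 q
  have hL : 0 < L := Real.logb_pos one_lt_two hq
  have ha : 0 < 1 - δ := by linarith
  have key := exists_nonneg_le_mul_and_three_le_iff (X := C + 2 * Q - (1 - δ) * L)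
    (b := 2 * δ - 1) (d := δ) (L := L) (Y := E - Q) (Z := (1 - δ) * L - (C + Q - E))
    ha (by linarith) (by linarith)
  rw [div_mul_add_div_mul_sub_le_iff ha]
  constructor
  · rintro ⟨t, ⟨ht0, htL⟩, h1, h2, h3⟩
    obtain ⟨⟨-, c1⟩, ⟨c2, c5⟩, ⟨c3, c4⟩⟩ :=
      key.1 ⟨t, ht0, by linarith, htL, by linarith, by linarith⟩
    refine ⟨by linarith, by linarith, by linarith, by linear_combination c4, by linear_combination c5⟩
  · rintro ⟨c1, c2, c3, c4, c5⟩
    obtain ⟨t, ht0, h1, htL, h2, h3⟩ := key.2 ⟨⟨hL.le, by linarith⟩,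
      ⟨by linarith, by linear_combination c5⟩, ⟨by linarith, by linear_combination c4⟩⟩
    exact ⟨t, ⟨ht0, htL⟩, by linarith, by linarith, by linarith⟩
end

section
/- For 0 ≤ λ < δ ≤ 1 and w = ⌊λn⌋, the total binomial probability of fewer than w successes satisfies Σ_{v=0}^{w−1} (n choose v) δ^v (1−δ)^{n−v} ≤ exp(−n(δ−λ)²). -/
open Real Finset MeasureTheory ProbabilityTheory

/-! Chernoff's method. A term with `v ≤ λn` is at most `exp (t (λn - v))` times itself for `t ≥ 0`,
so by the binomial theorem the lower tail is at most `exp (tλn) (1 - δ + δ exp (-t)) ^ n`.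
Hoeffding's lemma for a Bernoulli variable bounds the base by `exp (-δt + t² / 8)`, and
`t = 4 (δ - λ)` gives `exp (-2n (δ - λ)²)`. -/

lemma one_sub_add_mul_exp_le (p t : ℝ) (hp0 : 0 ≤ p) (hp1 : p ≤ 1) :
    1 - p + p * exp t ≤ exp (p * t + t ^ 2 / 8) := by
  set μ := bernoulliMeasure (1 : ℝ) 0 ⟨p, hp0, hp1⟩
  have h_mem : ∀ᵐ x ∂μ, x ∈ Set.Icc (0 : ℝ) 1 := by
    rw [ae_iff]
    exact bernoulliMeasure_apply_of_notMem_of_notMem _ measurableSet_Icc.compl (by simp) (by simp)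
  have h_mean : μ[id] = p := by simp [μ, integral_bernoulliMeasure]
  have hoeffding := (hasSubgaussianMGF_of_mem_Icc aemeasurable_id h_mem).mgf_le t
  rw [mgf, h_mean, integral_bernoulliMeasure] at hoeffding
  norm_num at hoeffding
  have h_one : exp (p * t) * exp (t * (1 - p)) = exp t := by rw [← exp_add]; ring_nf
  have h_zero : exp (p * t) * exp (-(t * p)) = 1 := by rw [← exp_add]; ring_nf; exact exp_zero
  calc 1 - p + p * exp t = exp (p * t) * (p * exp (t * (1 - p)) + (1 - p) * exp (-(t * p))) := by
        linear_combination (-p) * h_one - (1 - p) * h_zero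
    _ ≤ exp (p * t) * exp (1 / 4 * t ^ 2 / 2) := by gcongr
    _ = exp (p * t + t ^ 2 / 8) := by rw [← exp_add]; ring_nf

lemma sum_choose_mul_pow_le_exp_mul_add_pow {p q t a : ℝ} {n : ℕ} {s : Finset ℕ}
    (hp : 0 ≤ p) (hq : 0 ≤ q) (ht : 0 ≤ t)
    (hs : s ⊆ range (n + 1)) (ha : ∀ v ∈ s, (v : ℝ) ≤ a) :
    ∑ v ∈ s, (n.choose v : ℝ) * p ^ v * q ^ (n - v) ≤ exp (t * a) * (p * exp (-t) + q) ^ n := by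
  calc ∑ v ∈ s, (n.choose v : ℝ) * p ^ v * q ^ (n - v)
      ≤ ∑ v ∈ s, exp (t * (a - v)) * ((n.choose v : ℝ) * p ^ v * q ^ (n - v)) :=
        sum_le_sum fun v hv ↦ le_mul_of_one_le_left (by positivity)
          (one_le_exp (mul_nonneg ht (sub_nonneg.2 (ha v hv))))
    _ = exp (t * a) * ∑ v ∈ s, (p * exp (-t)) ^ v * q ^ (n - v) * n.choose v := by
        rw [mul_sum]
        refine sum_congr rfl fun v _ ↦ ?_
        rw [mul_pow, ← exp_nat_mul, mul_sub, exp_sub, mul_neg, exp_neg, div_eq_mul_inv,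
          mul_comm (v : ℝ) t]
        ring
    _ ≤ exp (t * a) * (p * exp (-t) + q) ^ n := by
        rw [add_pow]
        gcongr

lemma binomial_lower_tail_le {p lam : ℝ} {n : ℕ} {s : Finset ℕ}
    (hp0 : 0 ≤ p) (hp1 : p ≤ 1) (hlam : lam ≤ p)
    (hs : s ⊆ range (n + 1)) (hv : ∀ v ∈ s, (v : ℝ) ≤ lam * n) :
    ∑ v ∈ s, (n.choose v : ℝ) * p ^ v * (1 - p) ^ (n - v) ≤ exp (-2 * n * (p - lam) ^ 2) := by
  set t := 4 * (p - lam) with ht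
  calc ∑ v ∈ s, (n.choose v : ℝ) * p ^ v * (1 - p) ^ (n - v)
      ≤ exp (t * (lam * n)) * (p * exp (-t) + (1 - p)) ^ n :=
        sum_choose_mul_pow_le_exp_mul_add_pow hp0 (by linarith) (by positivity) hs hv
    _ ≤ exp (t * (lam * n)) * exp (p * -t + t ^ 2 / 8) ^ n := by
        gcongr
        linarith [neg_sq t ▸ one_sub_add_mul_exp_le p (-t) hp0 hp1]
    _ = exp (-2 * n * (p - lam) ^ 2) := by
        rw [← exp_nat_mul, ← exp_add, ht]
        ring_nf

theorem stmt13_general (n : ℕ) (δ lam : ℝ)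
    (h0 : 0 ≤ lam) (h1 : lam < δ) (h2 : δ ≤ 1) :
    ∑ v ∈ Finset.range ⌊lam * n⌋₊,
        (n.choose v : ℝ) * δ ^ v * (1 - δ) ^ (n - v)
      ≤ Real.exp (-(n : ℝ) * (δ - lam) ^ 2) := by
  have h_floor : ⌊lam * n⌋₊ ≤ n + 1 := Nat.floor_le_of_le (by push_cast; nlinarith)
  calc _ ≤ exp (-2 * n * (δ - lam) ^ 2) :=
        binomial_lower_tail_le (by linarith) h2 h1.le (range_subset_range.2 h_floor)
          fun v hv ↦ (Nat.lt_of_lt_floor (mem_range.1 hv)).le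
    _ ≤ exp (-(n : ℝ) * (δ - lam) ^ 2) := by gcongr; nlinarith [sq_nonneg (δ - lam)]

/-- Hoeffding lower tail bound for the binomial distribution: for `0 ≤ λ < δ ≤ 1`
and `w = ⌊λn⌋`, `Σ_{v=0}^{w−1} (n choose v) δ^v (1−δ)^{n−v} ≤ exp(−n(δ−λ)²)`. -/
theorem stmt13 (n : ℕ) (hn : 1 ≤ n) (δ lam : ℝ)
    (h0 : 0 ≤ lam) (h1 : lam < δ) (h2 : δ ≤ 1) :
    ∑ v ∈ Finset.range ⌊lam * n⌋₊,
        (n.choose v : ℝ) * δ ^ v * (1 - δ) ^ (n - v)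
      ≤ Real.exp (-(n : ℝ) * (δ - lam) ^ 2) :=
  stmt13_general n δ lam h0 h1 h2
end
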